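/- Let S = ⟨qm₁,…,qm_d, pn₁,…,pn_k⟩ be a specific gluing of S₁ and S₂. If ord_S(u + qw) > ord_S(u) + ord_S(qw) for some u∈S and w∈S₁, then u = qz₁ + pz₂ for some z₁∈S₁ and z₂∈S₂ such that ord_S(u) = ord_{S₁}(z₁) + ord_{S₂}(z₂) and ord_{S₁}(z₁ + w) > ord_{S₁}(z₁) + ord_{S₁}(w). -/

import Mathlib

/-!
Write `u = q z₁ + p z₂` with `z₂` in the Apéry set of `S₂` with respect to `q`. Since `p` and `q`
are coprime, every other expression of this element has the form `q (z₁ - p s) + p (z₂ + q s)`.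
Adding `s` copies of `q` in `S₂` raises the order by at most `s (ord q + l_q)` (below the reduction
number this is the definition of `l_q`; above it, peel off copies of the multiplicity), while
removing `s` copies of `p` from `S₁` lowers it by at least `s ord p`. For a specific gluing this
gives `ord_S (q z₁ + p z₂) = ord_{S₁} z₁ + ord_{S₂} z₂`. Applied to `u` and to `u + q w`, which
share `z₂`, together with `ord_{S₁} w ≤ ord_S (q w)`, it turns the hypothesis into the claim.
-/

open scoped Pointwise

/-- `S ⊆ ℕ` is a numerical semigroup: it contains `0`, is closed under
addition, and has finite complement in `ℕ`. -/
def IsNumSgp (S : Set ℕ) : Prop :=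
  (0 : ℕ) ∈ S ∧ (∀ a ∈ S, ∀ b ∈ S, a + b ∈ S) ∧ {x : ℕ | x ∉ S}.Finite

/-- `nM S t` is the `t`-fold sumset of the maximal ideal `M = S \ {0}`,
with the convention `nM S 0 = S`. -/
def nM (S : Set ℕ) : ℕ → Set ℕ
  | 0 => S
  | t + 1 => (S \ {0}) + nM S t

/-- the order of `s` with respect to `S` : the largest `t` with `s ∈ tM`. -/
noncomputable def ordS (S : Set ℕ) (s : ℕ) : ℕ := sSup {t : ℕ | s ∈ nM S t}

/-- the multiplicity of `S` : its least nonzero element. -/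
noncomputable def mult (S : Set ℕ) : ℕ := sInf {x : ℕ | x ∈ S ∧ x ≠ 0}

/-- the Apéry set of `S` with respect to `x` : elements `s ∈ S` with `s - x ∉ S`. -/
def Ap (S : Set ℕ) (x : ℕ) : Set ℕ := {s : ℕ | s ∈ S ∧ ¬ ∃ t ∈ S, s = t + x}

/-- membership of an integer in (the image in `ℤ` of) `S`. -/
def zmem (S : Set ℕ) (z : ℤ) : Prop := ∃ t ∈ S, (t : ℤ) = z

/-- the Frobenius number of `S` : the largest integer not in `S`. -/
noncomputable def Frob (S : Set ℕ) : ℤ := sSup {z : ℤ | ¬ zmem S z}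

/-- `S` is symmetric: for every integer `z`, `z ∈ S` iff `F(S) - z ∉ S`. -/
def IsSymmetric (S : Set ℕ) : Prop := ∀ z : ℤ, zmem S z ↔ ¬ zmem S (Frob S - z)

/-- the set of maximal elements of `Ap S x` with respect to the order
`u ⪯ v` iff `v = u + z` for some `z ∈ S`. -/
def MaxAp (S : Set ℕ) (x : ℕ) : Set ℕ :=
  {w : ℕ | w ∈ Ap S x ∧ ∀ y ∈ Ap S x, (∃ z ∈ S, y = w + z) → y = w}

/-- the set of maximal elements of `Ap S x` with respect to the order
`u ⪯_M v` iff `v = u + z` for some `z ∈ S` with `ord(v) = ord(u) + ord(z)`. -/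
def MaxMAp (S : Set ℕ) (x : ℕ) : Set ℕ :=
  {w : ℕ | w ∈ Ap S x ∧ ∀ y ∈ Ap S x,
    (∃ z ∈ S, y = w + z ∧ ordS S y = ordS S w + ordS S z) → y = w}

/-- `S` is M-pure with respect to `x` : all maximal elements of `Ap S x`
under `⪯_M` have the same order. -/
def MPureWrt (S : Set ℕ) (x : ℕ) : Prop :=
  ∀ w ∈ MaxMAp S x, ∀ w' ∈ MaxMAp S x, ordS S w = ordS S w'

/-- `S` is M-pure : it is M-pure with respect to its multiplicity. -/
def MPure (S : Set ℕ) : Prop := MPureWrt S (mult S)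

/-- `β_i(x)` : the number of elements of `Ap S x` of order `i`. -/
noncomputable def betaS (S : Set ℕ) (x i : ℕ) : ℕ := {w ∈ Ap S x | ordS S w = i}.ncard

/-- `d(x)` : the maximal order of an element of `Ap S x`. -/
noncomputable def dS (S : Set ℕ) (x : ℕ) : ℕ := sSup (ordS S '' Ap S x)

/-- the reduction number of `S` : the least `r` with `(r+1)M = m(S) + rM`. -/
noncomputable def redNum (S : Set ℕ) : ℕ :=
  sInf {r : ℕ | nM S (r + 1) = (fun y => mult S + y) '' nM S r}

/-- `l_x(S) = max { ord(s+x) - ord(x) - ord(s) : s ∈ S, ord(s) ≤ r }`. -/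
noncomputable def lS (S : Set ℕ) (x : ℕ) : ℕ :=
  sSup {t : ℕ | ∃ s ∈ S, ordS S s ≤ redNum S ∧ t = ordS S (s + x) - ordS S x - ordS S s}

/-- the Hilbert function of `S`. -/
noncomputable def HilbS (S : Set ℕ) (t : ℕ) : ℕ := (nM S t \ nM S (t + 1)).ncard

/-- The data of a gluing `S = ⟨q m₁, …, q m_d, p n₁, …, p n_k⟩` of two numerical
semigroups `S₁ = ⟨m₁, …, m_d⟩` and `S₂ = ⟨n₁, …, n_k⟩`, minimally generated by
`m₁ < ⋯ < m_d` and `n₁ < ⋯ < n_k`, where `p ∈ S₁ \ {m₁, …, m_d}`,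
`q ∈ S₂ \ {n₁, …, n_k}` and `gcd(p, q) = 1`. -/
structure Gluing where
  d : ℕ
  k : ℕ
  hd : 0 < d
  hk : 0 < k
  m : Fin d → ℕ
  n : Fin k → ℕ
  p : ℕ
  q : ℕ
  hm : StrictMono m
  hn : StrictMono n
  hmin₁ : ∀ i, m i ∉ AddSubmonoid.closure (Set.range m \ {m i})
  hmin₂ : ∀ j, n j ∉ AddSubmonoid.closure (Set.range n \ {n j})
  hnum₁ : IsNumSgp (AddSubmonoid.closure (Set.range m) : Set ℕ)
  hnum₂ : IsNumSgp (AddSubmonoid.closure (Set.range n) : Set ℕ)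
  hp : p ∈ AddSubmonoid.closure (Set.range m)
  hq : q ∈ AddSubmonoid.closure (Set.range n)
  hpm : p ∉ Set.range m
  hqn : q ∉ Set.range n
  hpq : Nat.gcd p q = 1

/-- the numerical semigroup `S₁ = ⟨m₁, …, m_d⟩`. -/
def Gluing.S₁ (G : Gluing) : Set ℕ := (AddSubmonoid.closure (Set.range G.m) : Set ℕ)

/-- the numerical semigroup `S₂ = ⟨n₁, …, n_k⟩`. -/
def Gluing.S₂ (G : Gluing) : Set ℕ := (AddSubmonoid.closure (Set.range G.n) : Set ℕ)

/-- the glued numerical semigroup `S = ⟨q m₁, …, q m_d, p n₁, …, p n_k⟩`. -/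
def Gluing.S (G : Gluing) : Set ℕ :=
  (AddSubmonoid.closure
    ((fun x => G.q * x) '' Set.range G.m ∪ (fun x => G.p * x) '' Set.range G.n) : Set ℕ)

/-- the smallest generator `m₁` of `S₁`. -/
def Gluing.m₁ (G : Gluing) : ℕ := G.m ⟨0, G.hd⟩

/-- the smallest generator `n₁` of `S₂`. -/
def Gluing.n₁ (G : Gluing) : ℕ := G.n ⟨0, G.hk⟩

/-- the gluing is specific if `ord_{S₂}(q) + l_q(S₂) ≤ ord_{S₁}(p)`. -/
def Gluing.Specific (G : Gluing) : Prop := ordS G.S₂ G.q + lS G.S₂ G.q ≤ ordS G.S₁ G.p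

/-- the gluing is nice if `q = a n₁` for some `1 < a ≤ ord_{S₁}(p)`. -/
def Gluing.Nice (G : Gluing) : Prop := ∃ a : ℕ, 1 < a ∧ a ≤ ordS G.S₁ G.p ∧ G.q = a * G.n₁


section Order

variable {S : AddSubmonoid ℕ}

lemma mul_nat_mem {x : ℕ} (hx : x ∈ S) (k : ℕ) : x * k ∈ S := by
  simpa [mul_comm] using S.nsmul_mem hx k

lemma mem_nM_succ {x t : ℕ} :
    x ∈ nM S (t + 1) ↔ ∃ a ∈ S, a ≠ 0 ∧ ∃ b ∈ nM S t, a + b = x := by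
  simp only [nM, Set.mem_add, Set.mem_sdiff, SetLike.mem_coe, Set.mem_singleton_iff, and_assoc]

lemma nM_subset : ∀ t, nM S t ⊆ S
  | 0 => subset_rfl
  | t + 1 => fun _ hx => by
    obtain ⟨a, ha, -, b, hb, rfl⟩ := mem_nM_succ.1 hx
    exact S.add_mem ha (nM_subset t hb)

lemma add_mem_nM_of_mem {a x t : ℕ} (ha : a ∈ S) (hx : x ∈ nM S t) : a + x ∈ nM S t := by
  induction t generalizing x with
  | zero => exact S.add_mem ha hx
  | succ t ih =>
    obtain ⟨c, hc, hc0, y, hy, rfl⟩ := mem_nM_succ.1 hx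
    exact mem_nM_succ.2 ⟨c, hc, hc0, a + y, ih hy, by ring⟩

lemma add_mem_nM {a b s t : ℕ} (ha : a ∈ nM S s) (hb : b ∈ nM S t) :
    a + b ∈ nM S (s + t) := by
  induction s generalizing a with
  | zero => simpa [add_comm] using add_mem_nM_of_mem (S := S) ha hb
  | succ s ih =>
    obtain ⟨c, hc, hc0, y, hy, rfl⟩ := mem_nM_succ.1 ha
    rw [Nat.add_right_comm]
    exact mem_nM_succ.2 ⟨c, hc, hc0, y + b, ih hy, by ring⟩

lemma mul_le_of_mem_nM {e x t : ℕ} (he : ∀ z ∈ S, z ≠ 0 → e ≤ z) (hx : x ∈ nM S t) :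
    t * e ≤ x := by
  induction t generalizing x with
  | zero => simp
  | succ t ih =>
    obtain ⟨a, ha, ha0, y, hy, rfl⟩ := mem_nM_succ.1 hx
    have := he a ha ha0
    have := ih hy
    rw [Nat.succ_mul]
    omega

lemma le_of_mem_nM {x t : ℕ} (hx : x ∈ nM S t) : t ≤ x := by
  simpa using mul_le_of_mem_nM (fun z _ hz => Nat.one_le_iff_ne_zero.2 hz) hx

lemma mem_nM_ordS {x : ℕ} (hx : x ∈ S) : x ∈ nM S (ordS S x) :=
  Nat.sSup_mem (s := {t | x ∈ nM S t}) ⟨0, hx⟩ ⟨x, fun _ => le_of_mem_nM⟩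

lemma le_ordS {x t : ℕ} (hx : x ∈ nM S t) : t ≤ ordS S x :=
  le_csSup ⟨x, fun _ => le_of_mem_nM⟩ hx

lemma ordS_add_ordS_le {a b : ℕ} (ha : a ∈ S) (hb : b ∈ S) :
    ordS S a + ordS S b ≤ ordS S (a + b) :=
  le_ordS (add_mem_nM (mem_nM_ordS ha) (mem_nM_ordS hb))

lemma one_le_ordS {a : ℕ} (ha : a ∈ S) (ha0 : a ≠ 0) : 1 ≤ ordS S a :=
  le_ordS (mem_nM_succ.2 ⟨a, ha, ha0, 0, S.zero_mem, rfl⟩)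

lemma ordS_add_mul_le {a b : ℕ} (ha : a ∈ S) (hb : b ∈ S) (k : ℕ) :
    ordS S a + k * ordS S b ≤ ordS S (a + b * k) := by
  induction k with
  | zero => simp
  | succ k ih =>
    have := ordS_add_ordS_le (S.add_mem ha (mul_nat_mem hb k)) hb
    rw [Nat.succ_mul, mul_add_one, ← add_assoc, ← add_assoc]
    omega

end Order

section ReductionNumber

variable {S : AddSubmonoid ℕ}

lemma exists_forall_ge_mem (hS : {x : ℕ | x ∉ S}.Finite) : ∃ N, ∀ x, N ≤ x → x ∈ S := by
  obtain ⟨N, hN⟩ := hS.bddAbove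
  exact ⟨N + 1, fun x hx => by_contra fun h => absurd (hN h) (by omega)⟩

lemma mult_mem_and_ne_zero (hS : {x : ℕ | x ∉ S}.Finite) : mult S ∈ S ∧ mult S ≠ 0 := by
  obtain ⟨N, hN⟩ := exists_forall_ge_mem hS
  exact Nat.sInf_mem (s := {x | x ∈ S ∧ x ≠ 0}) ⟨N + 1, hN _ (by omega), by omega⟩

lemma mult_le {z : ℕ} (hz : z ∈ S) (hz0 : z ≠ 0) : mult S ≤ z :=
  Nat.sInf_le ⟨hz, hz0⟩

lemma add_mul_mem_nM {e s : ℕ} (he : e ∈ S) (he0 : e ≠ 0) (hs : s ∈ S) :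
    ∀ t, s + t * e ∈ nM S t
  | 0 => by rwa [zero_mul, add_zero]
  | t + 1 => mem_nM_succ.2 ⟨e, he, he0, s + t * e, add_mul_mem_nM he he0 hs t, by ring⟩

lemma image_add_nM_subset {e : ℕ} (he : e ∈ S) (he0 : e ≠ 0) (t : ℕ) :
    (fun y => e + y) '' nM S t ⊆ nM S (t + 1) := by
  rintro _ ⟨y, hy, rfl⟩
  exact mem_nM_succ.2 ⟨e, he, he0, y, hy, rfl⟩

/-- The sets `{y | y + t e ∈ tM}` increase with `t` and contain `S`, so they stabilise because
`ℕ \ S` is finite; where they do, `(t+1)M = e + tM`. -/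
lemma exists_nM_succ_eq_image (hS : {x : ℕ | x ∉ S}.Finite) :
    ∃ r, nM S (r + 1) = (fun y => mult S + y) '' nM S r := by
  obtain ⟨he, he0⟩ := mult_mem_and_ne_zero hS
  set e := mult S
  let gap : ℕ → Set ℕ := fun t => {y | y + t * e ∉ nM S t}
  have gap_subset t : gap t ⊆ {x | x ∉ S} := fun y hy hyS => hy (add_mul_mem_nM he he0 hyS t)
  have gap_succ_subset t : gap (t + 1) ⊆ gap t := fun y hy hyt => hy <| by
    simpa [Nat.succ_mul, add_comm, add_left_comm] using mem_nM_succ.2 ⟨e, he, he0, _, hyt, rfl⟩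
  obtain ⟨r, hr⟩ := Nat.sInf_mem (Set.range_nonempty fun t => (gap t).ncard)
  have hgap : gap (r + 1) = gap r :=
    Set.eq_of_subset_of_ncard_le (gap_succ_subset r)
      (hr.trans_le (Nat.sInf_le ⟨r + 1, rfl⟩)) (hS.subset (gap_subset r))
  refine ⟨r, (Set.Subset.antisymm ?_ (image_add_nM_subset he he0 r))⟩
  intro x hx
  have hle := mul_le_of_mem_nM (e := e) (fun z hz hz0 => mult_le hz hz0) hx
  have hmem : x - (r + 1) * e ∉ gap (r + 1) := fun h => h (by rwa [Nat.sub_add_cancel hle])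
  rw [hgap] at hmem
  refine ⟨_, not_not.1 hmem, ?_⟩
  rw [Nat.succ_mul] at hle ⊢
  show e + _ = x
  omega

lemma nM_succ_eq_image_of_redNum_le (hS : {x : ℕ | x ∉ S}.Finite) {t : ℕ} (ht : redNum S ≤ t) :
    nM S (t + 1) = (fun y => mult S + y) '' nM S t := by
  obtain ⟨he, he0⟩ := mult_mem_and_ne_zero hS
  induction t, ht using Nat.le_induction with
  | base => exact Nat.sInf_mem (exists_nM_succ_eq_image hS)
  | succ t _ ih =>
    refine Set.Subset.antisymm (fun x hx => ?_) (image_add_nM_subset he he0 _)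
    obtain ⟨a, ha, ha0, _, hy, rfl⟩ := mem_nM_succ.1 hx
    rw [ih] at hy
    obtain ⟨y, hy, rfl⟩ := hy
    exact ⟨a + y, mem_nM_succ.2 ⟨a, ha, ha0, y, hy, rfl⟩, by ring⟩

lemma exists_eq_mult_add_of_redNum_lt_ordS (hS : {x : ℕ | x ∉ S}.Finite) {x : ℕ} (hx : x ∈ S)
    (h : redNum S < ordS S x) : ∃ y ∈ S, x = mult S + y ∧ ordS S x ≤ ordS S y + 1 := by
  have hmem := mem_nM_ordS hx
  rw [← Nat.sub_add_cancel (Nat.one_le_of_lt h),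
    nM_succ_eq_image_of_redNum_le hS (Nat.le_sub_one_of_lt h)] at hmem
  obtain ⟨y, hy, rfl⟩ := hmem
  exact ⟨y, nM_subset _ hy, rfl, by have := le_ordS hy; omega⟩

lemma lt_of_ordS_le_redNum (hS : {x : ℕ | x ∉ S}.Finite) {N s : ℕ} (hN : ∀ x, N ≤ x → x ∈ S)
    (hs : ordS S s ≤ redNum S) : s < N + (redNum S + 1) * mult S := by
  obtain ⟨he, he0⟩ := mult_mem_and_ne_zero hS
  by_contra! hle
  have := le_ordS (Nat.sub_add_cancel (le_of_add_le_right hle) ▸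
    add_mul_mem_nM he he0 (hN _ (Nat.le_sub_of_add_le hle)) (redNum S + 1))
  omega

lemma ordS_add_le_of_ordS_le_redNum (hS : {x : ℕ | x ∉ S}.Finite) {b q : ℕ} (hq : q ∈ S)
    (hb : b ∈ S) (hbr : ordS S b ≤ redNum S) :
    ordS S (b + q) ≤ ordS S b + ordS S q + lS S q := by
  obtain ⟨N, hN⟩ := exists_forall_ge_mem hS
  have hbdd : BddAbove {t | ∃ s ∈ (S : Set ℕ), ordS S s ≤ redNum S ∧
      t = ordS S (s + q) - ordS S q - ordS S s} := by
    refine ⟨N + (redNum S + 1) * mult S + q, ?_⟩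
    rintro _ ⟨s, hs, hsr, rfl⟩
    have := lt_of_ordS_le_redNum hS hN hsr
    have := le_of_mem_nM (mem_nM_ordS (S.add_mem hs hq))
    omega
  have := le_csSup hbdd ⟨b, hb, hbr, rfl⟩
  unfold lS
  omega

/-- Above the reduction number, subtracting the multiplicity lowers the order by exactly one,
which reduces the claim to elements of order at most `redNum S`. -/
lemma ordS_add_le_add_lS (hS : {x : ℕ | x ∉ S}.Finite) {q : ℕ} (hq : q ∈ S) {b : ℕ}
    (hb : b ∈ S) : ordS S (b + q) ≤ ordS S b + ordS S q + lS S q := by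
  induction b using Nat.strong_induction_on with
  | _ b ih =>
  by_cases hbr : ordS S b ≤ redNum S
  · exact ordS_add_le_of_ordS_le_redNum hS hq hb hbr
  obtain ⟨he, he0⟩ := mult_mem_and_ne_zero hS
  obtain ⟨b', hb', rfl, -⟩ := exists_eq_mult_add_of_redNum_lt_ordS hS hb (by omega)
  obtain ⟨c, -, hc, hbq⟩ := exists_eq_mult_add_of_redNum_lt_ordS hS (S.add_mem hb hq)
    (by have := ordS_add_ordS_le hb hq; omega)
  obtain rfl : c = b' + q := by omega
  have := ih b' (by omega) hb'
  have := ordS_add_ordS_le he hb'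
  have := one_le_ordS he he0
  omega

lemma ordS_add_mul_le_add_lS (hS : {x : ℕ | x ∉ S}.Finite) {q b : ℕ} (hq : q ∈ S) (hb : b ∈ S)
    (k : ℕ) : ordS S (b + q * k) ≤ ordS S b + k * (ordS S q + lS S q) := by
  induction k with
  | zero => simp
  | succ k ih =>
    have := ordS_add_le_add_lS hS hq (S.add_mem hb (mul_nat_mem hq k))
    rw [mul_add_one, ← add_assoc, Nat.succ_mul]
    omega

end ReductionNumber

lemma exists_mem_ne_zero_le_of_mem_closure {s : Set ℕ} {x : ℕ}
    (hx : x ∈ AddSubmonoid.closure s) (hx0 : x ≠ 0) : ∃ y ∈ s, y ≠ 0 ∧ y ≤ x := by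
  induction hx using AddSubmonoid.closure_induction with
  | mem y hy => exact ⟨y, hy, hx0, le_rfl⟩
  | zero => exact absurd rfl hx0
  | add a b _ _ iha ihb =>
    obtain rfl | ha0 := eq_or_ne a 0
    · simpa using ihb (by simpa using hx0)
    · obtain ⟨y, hy, hy0, hya⟩ := iha ha0
      exact ⟨y, hy, hy0, le_add_right hya⟩

lemma one_mem_of_one_mem_closure {s : Set ℕ} (h : 1 ∈ AddSubmonoid.closure s) : 1 ∈ s := by
  obtain ⟨y, hy, hy0, hy1⟩ := exists_mem_ne_zero_le_of_mem_closure h one_ne_zero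
  rwa [show y = 1 by omega] at hy

lemma mul_mem_nM {T S : AddSubmonoid ℕ} {c : ℕ} (hc : 0 < c) (hTS : ∀ x ∈ T, c * x ∈ S) {a t : ℕ}
    (ha : a ∈ nM T t) : c * a ∈ nM S t := by
  induction t generalizing a with
  | zero => exact hTS a ha
  | succ t ih =>
    obtain ⟨x, hx, hx0, y, hy, rfl⟩ := mem_nM_succ.1 ha
    exact mem_nM_succ.2 ⟨c * x, hTS x hx, by positivity, c * y, ih hy, by ring⟩

lemma exists_mem_Ap_add_mul {S : AddSubmonoid ℕ} {q b : ℕ} (hq : 0 < q) (hb : b ∈ S) :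
    ∃ z ∈ Ap S q, ∃ k, b = z + q * k := by
  induction b using Nat.strong_induction_on with
  | _ b ih =>
  by_cases hAp : ∃ c ∈ (S : Set ℕ), b = c + q
  · obtain ⟨c, hc, rfl⟩ := hAp
    obtain ⟨z, hz, k, rfl⟩ := ih c (by omega) hc
    exact ⟨z, hz, k + 1, by ring⟩
  · exact ⟨b, ⟨hb, hAp⟩, 0, by simp⟩

lemma exists_eq_add_mul_of_mul_add_mul_eq {p q x y x' y' : ℕ} (hpq : Nat.Coprime p q)
    (hq : 0 < q) (h : q * x + p * y = q * x' + p * y') (hy : y ≤ y') :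
    ∃ s, y' = y + q * s ∧ x = x' + p * s := by
  have hx : x' ≤ x := by
    have := Nat.mul_le_mul_left p hy
    exact Nat.le_of_mul_le_mul_left (by omega) hq
  have hdiff : p * (y' - y) = q * (x - x') := by
    rw [Nat.mul_sub, Nat.mul_sub]
    omega
  obtain ⟨s, hs⟩ : q ∣ y' - y := hpq.symm.dvd_of_dvd_mul_left (hdiff ▸ dvd_mul_right q _)
  refine ⟨s, by omega, ?_⟩
  rw [hs, mul_left_comm] at hdiff
  have := Nat.eq_of_mul_eq_mul_left hq hdiff
  omega

namespace Gluing

variable (G : Gluing)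

lemma q_pos : 0 < G.q := by
  refine Nat.pos_of_ne_zero fun hq => G.hpm ?_
  have hp : G.p = 1 := by simpa [hq] using G.hpq
  exact hp ▸ one_mem_of_one_mem_closure (hp ▸ G.hp)

lemma p_pos : 0 < G.p := by
  refine Nat.pos_of_ne_zero fun hp => G.hqn ?_
  have hq : G.q = 1 := by simpa [hp] using G.hpq
  exact hq ▸ one_mem_of_one_mem_closure (hq ▸ G.hq)

lemma mem_S_iff {u : ℕ} : u ∈ G.S ↔ ∃ a ∈ G.S₁, ∃ b ∈ G.S₂, G.q * a + G.p * b = u := by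
  have hS : AddSubmonoid.closure
      ((fun x => G.q * x) '' Set.range G.m ∪ (fun x => G.p * x) '' Set.range G.n) =
      (AddSubmonoid.closure (Set.range G.m)).map (AddMonoidHom.mulLeft G.q) ⊔
        (AddSubmonoid.closure (Set.range G.n)).map (AddMonoidHom.mulLeft G.p) := by
    rw [AddSubmonoid.closure_union, AddMonoidHom.map_mclosure, AddMonoidHom.map_mclosure]
    rfl
  simp only [Gluing.S, SetLike.mem_coe, hS, AddSubmonoid.mem_sup, AddSubmonoid.mem_map,
    AddMonoidHom.coe_mulLeft]
  constructor
  · rintro ⟨_, ⟨a, ha, rfl⟩, _, ⟨b, hb, rfl⟩, rfl⟩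
    exact ⟨a, ha, b, hb, rfl⟩
  · rintro ⟨a, ha, b, hb, rfl⟩
    exact ⟨_, ⟨a, ha, rfl⟩, _, ⟨b, hb, rfl⟩, rfl⟩

lemma q_mul_mem {a : ℕ} (ha : a ∈ G.S₁) : G.q * a ∈ G.S :=
  G.mem_S_iff.2 ⟨a, ha, 0, AddSubmonoid.zero_mem _, by simp⟩

lemma p_mul_mem {b : ℕ} (hb : b ∈ G.S₂) : G.p * b ∈ G.S :=
  G.mem_S_iff.2 ⟨0, AddSubmonoid.zero_mem _, b, hb, by simp⟩

lemma ordS₁_le_ordS_q_mul {a : ℕ} (ha : a ∈ G.S₁) : ordS G.S₁ a ≤ ordS G.S (G.q * a) :=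
  le_ordS (mul_mem_nM G.q_pos (fun _ => G.q_mul_mem) (mem_nM_ordS ha))

lemma ordS₁_add_ordS₂_le {a b : ℕ} (ha : a ∈ G.S₁) (hb : b ∈ G.S₂) :
    ordS G.S₁ a + ordS G.S₂ b ≤ ordS G.S (G.q * a + G.p * b) :=
  le_ordS <| add_mem_nM (mul_mem_nM G.q_pos (fun _ => G.q_mul_mem) (mem_nM_ordS ha))
    (mul_mem_nM G.p_pos (fun _ => G.p_mul_mem) (mem_nM_ordS hb))

lemma exists_le_ordS_of_mem_nM {u t : ℕ} (hu : u ∈ nM G.S t) :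
    ∃ a ∈ G.S₁, ∃ b ∈ G.S₂, G.q * a + G.p * b = u ∧ t ≤ ordS G.S₁ a + ordS G.S₂ b := by
  induction t generalizing u with
  | zero =>
    obtain ⟨a, ha, b, hb, rfl⟩ := G.mem_S_iff.1 hu
    exact ⟨a, ha, b, hb, rfl, Nat.zero_le _⟩
  | succ t ih =>
    obtain ⟨g, hg, hg0, v, hv, rfl⟩ := mem_nM_succ.1 hu
    obtain ⟨a, ha, b, hb, rfl⟩ := G.mem_S_iff.1 hg
    obtain ⟨a', ha', b', hb', rfl, hv⟩ := ih hv
    refine ⟨a + a', AddSubmonoid.add_mem _ ha ha', b + b', AddSubmonoid.add_mem _ hb hb',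
      by ring, ?_⟩
    have hab : 1 ≤ ordS G.S₁ a + ordS G.S₂ b := by
      obtain rfl | ha0 := eq_or_ne a 0
      · have : 1 ≤ ordS G.S₂ b := one_le_ordS hb (by rintro rfl; simp at hg0)
        omega
      · have : 1 ≤ ordS G.S₁ a := one_le_ordS ha ha0
        omega
    have : ordS G.S₁ a + ordS G.S₁ a' ≤ ordS G.S₁ (a + a') := ordS_add_ordS_le ha ha'
    have : ordS G.S₂ b + ordS G.S₂ b' ≤ ordS G.S₂ (b + b') := ordS_add_ordS_le hb hb'
    omega

lemma exists_eq_add_mul_of_mem_Ap {z₁ z₂ a b : ℕ} (hz₂ : z₂ ∈ Ap G.S₂ G.q) (hb : b ∈ G.S₂)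
    (h : G.q * z₁ + G.p * z₂ = G.q * a + G.p * b) :
    ∃ s, b = z₂ + G.q * s ∧ z₁ = a + G.p * s := by
  obtain hle | hlt := le_or_gt z₂ b
  · exact exists_eq_add_mul_of_mul_add_mul_eq G.hpq G.q_pos h hle
  obtain ⟨s, rfl, -⟩ := exists_eq_add_mul_of_mul_add_mul_eq G.hpq G.q_pos h.symm hlt.le
  obtain _ | s := s
  · simp at hlt
  exact (hz₂.2 ⟨b + G.q * s, AddSubmonoid.add_mem _ hb (mul_nat_mem G.hq s), by ring⟩).elim

lemma ordS_eq_of_mem_Ap (hG : G.Specific) {z₁ z₂ : ℕ} (hz₁ : z₁ ∈ G.S₁)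
    (hz₂ : z₂ ∈ Ap G.S₂ G.q) :
    ordS G.S (G.q * z₁ + G.p * z₂) = ordS G.S₁ z₁ + ordS G.S₂ z₂ := by
  refine le_antisymm ?_ (G.ordS₁_add_ordS₂_le hz₁ hz₂.1)
  obtain ⟨a, ha, b, hb, hab, hord⟩ :=
    G.exists_le_ordS_of_mem_nM (t := ordS G.S _)
      (mem_nM_ordS (G.mem_S_iff.2 ⟨z₁, hz₁, z₂, hz₂.1, rfl⟩))
  obtain ⟨s, rfl, rfl⟩ := G.exists_eq_add_mul_of_mem_Ap hz₂ hb hab.symm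
  have hb_le : ordS G.S₂ (z₂ + G.q * s) ≤ ordS G.S₂ z₂ + s * (ordS G.S₂ G.q + lS G.S₂ G.q) :=
    ordS_add_mul_le_add_lS G.hnum₂.2.2 G.hq hz₂.1 s
  have ha_le : ordS G.S₁ a + s * ordS G.S₁ G.p ≤ ordS G.S₁ (a + G.p * s) :=
    ordS_add_mul_le ha G.hp s
  have := Nat.mul_le_mul_left s hG
  omega

end Gluing

/-- for a specific gluing `S` of `S₁` and `S₂`, if
`ord_S(u + qw) > ord_S(u) + ord_S(qw)` for some `u ∈ S` and `w ∈ S₁`, then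
`u = qz₁ + pz₂` for some `z₁ ∈ S₁`, `z₂ ∈ S₂` with
`ord_S(u) = ord_{S₁}(z₁) + ord_{S₂}(z₂)` and
`ord_{S₁}(z₁ + w) > ord_{S₁}(z₁) + ord_{S₁}(w)`. -/
theorem stmt14 (G : Gluing) (hG : G.Specific) (u w : ℕ) (hu : u ∈ G.S) (hw : w ∈ G.S₁)
    (h : ordS G.S u + ordS G.S (G.q * w) < ordS G.S (u + G.q * w)) :
    ∃ z₁ ∈ G.S₁, ∃ z₂ ∈ G.S₂,
      u = G.q * z₁ + G.p * z₂ ∧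
      ordS G.S u = ordS G.S₁ z₁ + ordS G.S₂ z₂ ∧
      ordS G.S₁ z₁ + ordS G.S₁ w < ordS G.S₁ (z₁ + w) := by
  obtain ⟨a, ha, b, hb, rfl⟩ := G.mem_S_iff.1 hu
  obtain ⟨z₂, hz₂, k, rfl⟩ := exists_mem_Ap_add_mul G.q_pos hb
  have hz₁ : a + G.p * k ∈ G.S₁ := AddSubmonoid.add_mem _ ha (mul_nat_mem G.hp k)
  have hu_eq : G.q * a + G.p * (z₂ + G.q * k) = G.q * (a + G.p * k) + G.p * z₂ := by ring
  have huw_eq : G.q * (a + G.p * k) + G.p * z₂ + G.q * w =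
      G.q * (a + G.p * k + w) + G.p * z₂ := by ring
  have hord_u := G.ordS_eq_of_mem_Ap hG hz₁ hz₂
  have hord_uw := G.ordS_eq_of_mem_Ap hG (AddSubmonoid.add_mem _ hz₁ hw) hz₂
  have hw_le := G.ordS₁_le_ordS_q_mul hw
  rw [hu_eq, huw_eq] at h
  rw [hu_eq]
  exact ⟨_, hz₁, z₂, hz₂.1, rfl, hord_u, by omega⟩
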